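/- Let p be an odd prime and 1 ≤ i ≤ (p−1)/2. Then the induced subgraph of Π_p on the set of neighbours of the principal-axis vertex [i,0] is isomorphic to the cycle graph on p vertices. -/

import Mathlib

/-- Pairs `(λ, μ) ∈ (ℤ/N)²` with `gcd(λ, μ, N) = 1`. -/
abbrev PlatonicPair (N : ℕ) : Type :=
  {x : ZMod N × ZMod N // Nat.gcd (Nat.gcd x.1.val x.2.val) N = 1}

/-- Identify `(λ,μ)` with `(-λ,-μ)`. -/
instance platonicSetoid (N : ℕ) : Setoid (PlatonicPair N) where
  r x y := y.val = x.val ∨ y.val = -x.val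
  iseqv := by
    refine ⟨fun _ => Or.inl rfl, ?_, ?_⟩
    · rintro x y (h | h)
      · exact Or.inl h.symm
      · right; rw [h, neg_neg]
    · rintro x y z (h1 | h1) (h2 | h2)
      · exact Or.inl (h2.trans h1)
      · right; rw [h2, h1]
      · right; rw [h2, h1]
      · left; rw [h2, h1, neg_neg]

/-- Vertices of the Platonic graph: classes `[λ,μ] = {(λ,μ), (-λ,-μ)}`. -/
abbrev PlatonicVertex (N : ℕ) : Type := Quotient (platonicSetoid N)

/-- The Platonic graph `Π_N`: distinct classes `[λ,μ]`, `[ν,ω]` are adjacent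
iff `λω - μν = ±1` in `ℤ/N`. -/
def Platonic (N : ℕ) : SimpleGraph (PlatonicVertex N) where
  Adj a b := a ≠ b ∧ ∃ x y : PlatonicPair N, ⟦x⟧ = a ∧ ⟦y⟧ = b ∧
    (x.val.1 * y.val.2 - x.val.2 * y.val.1 = 1 ∨
     x.val.1 * y.val.2 - x.val.2 * y.val.1 = -1)
  symm := by
    refine ⟨?_⟩
    rintro a b ⟨hne, x, y, hx, hy, hdet⟩
    refine ⟨hne.symm, y, x, hy, hx, ?_⟩
    rcases hdet with h | h
    · right; linear_combination -h
    · left; linear_combination -h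
  loopless := ⟨fun a h => h.1 rfl⟩

instance platonicDecRel (N : ℕ) :
    DecidableRel (α := PlatonicPair N) (· ≈ ·) := fun x y =>
  inferInstanceAs (Decidable (y.val = x.val ∨ y.val = -x.val))

instance (N : ℕ) : DecidableEq (PlatonicVertex N) :=
  @Quotient.decidableEq _ _ (platonicDecRel N)

instance (N : ℕ) [NeZero N] : Fintype (PlatonicVertex N) :=
  Quotient.fintype _

instance platonicAdjDec (N : ℕ) [NeZero N] : DecidableRel (Platonic N).Adj := fun a b =>
  inferInstanceAs (Decidable (a ≠ b ∧ ∃ x y : PlatonicPair N, ⟦x⟧ = a ∧ ⟦y⟧ = b ∧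
    (x.val.1 * y.val.2 - x.val.2 * y.val.1 = 1 ∨
     x.val.1 * y.val.2 - x.val.2 * y.val.1 = -1)))

/-- The class of `(λ,μ)` has nonvanishing second coordinate. -/
def secondNZ (N : ℕ) (v : PlatonicVertex N) : Prop :=
  ∀ x : PlatonicPair N, ⟦x⟧ = v → x.val.2 ≠ 0

instance (N : ℕ) [NeZero N] : DecidablePred (secondNZ N) := fun _ =>
  Fintype.decidableForallFintype

/-- The modified Platonic graph `Π_p'`: induced subgraph of `Π_p` on the classes
`[λ,μ]` with `μ ≠ 0`. -/
def ModPlatonic (N : ℕ) : SimpleGraph {v : PlatonicVertex N | secondNZ N v} :=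
  SimpleGraph.induce {v : PlatonicVertex N | secondNZ N v} (Platonic N)

instance (N : ℕ) [NeZero N] : DecidableRel (ModPlatonic N).Adj := fun a b =>
  inferInstanceAs (Decidable ((Platonic N).Adj a b))

/-!
Let `u` be a unit of `ℤ/N`. A class `[λ, μ]` is adjacent to `[u, 0]` iff `uμ = ±1`, and since
`μ ≠ -μ` for `N ≥ 3`, each such class has exactly one representative with `μ = u⁻¹`. Writing it
as `[k u, u⁻¹]`, the determinant of `[k u, u⁻¹]` and `[k' u, u⁻¹]` is `k - k'`, so
`k ↦ [k u, u⁻¹]` identifies the cycle `ℤ/N` with the neighbourhood of `[u, 0]`.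
-/

namespace Platonic

variable {N : ℕ}

section Det

variable {R : Type*} [CommRing R]

def det₂ (v w : R × R) : R := v.1 * w.2 - v.2 * w.1

@[simp]
theorem det₂_neg_left (v w : R × R) : det₂ (-v) w = -det₂ v w := by
  simp only [det₂, Prod.fst_neg, Prod.snd_neg]
  ring

@[simp]
theorem det₂_neg_right (v w : R × R) : det₂ v (-w) = -det₂ v w := by
  simp only [det₂, Prod.fst_neg, Prod.snd_neg]
  ring

end Det

theorem mk_eq_mk_iff {x y : PlatonicPair N} :
    (⟦x⟧ : PlatonicVertex N) = ⟦y⟧ ↔ y.val = x.val ∨ y.val = -x.val :=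
  Quotient.eq

theorem det₂_mk_eq_or_eq_neg {x x' y y' : PlatonicPair N}
    (hx : (⟦x⟧ : PlatonicVertex N) = ⟦x'⟧) (hy : (⟦y⟧ : PlatonicVertex N) = ⟦y'⟧) :
    det₂ x'.val y'.val = det₂ x.val y.val ∨ det₂ x'.val y'.val = -det₂ x.val y.val := by
  rcases mk_eq_mk_iff.1 hx with hx | hx <;> rcases mk_eq_mk_iff.1 hy with hy | hy <;>
    simp [hx, hy]

theorem adj_mk_iff (x y : PlatonicPair N) :
    (Platonic N).Adj ⟦x⟧ ⟦y⟧ ↔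
      (⟦x⟧ : PlatonicVertex N) ≠ ⟦y⟧ ∧ (det₂ x.val y.val = 1 ∨ det₂ x.val y.val = -1) := by
  constructor
  · rintro ⟨hne, x', y', hx, hy, hdet⟩
    refine ⟨hne, ?_⟩
    change det₂ x'.val y'.val = 1 ∨ det₂ x'.val y'.val = -1 at hdet
    rcases det₂_mk_eq_or_eq_neg hx.symm hy.symm with h | h <;> rw [h] at hdet
    · exact hdet
    · exact hdet.symm.imp neg_inj.mp neg_eq_iff_eq_neg.mp
  · rintro ⟨hne, hdet⟩
    exact ⟨hne, x, y, rfl, rfl, hdet⟩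

theorem gcd_gcd_val_unit_eq_one (a : ZMod N) (v : (ZMod N)ˣ) :
    Nat.gcd (Nat.gcd a.val (v : ZMod N).val) N = 1 :=
  Nat.Coprime.coprime_dvd_left (Nat.gcd_dvd_right _ _) (ZMod.val_coe_unit_coprime v)

section Wheel

variable (u : (ZMod N)ˣ)

def wheelPair (k : ZMod N) : PlatonicPair N :=
  ⟨(k * (u : ZMod N), (↑u⁻¹ : ZMod N)), gcd_gcd_val_unit_eq_one (k * (u : ZMod N)) u⁻¹⟩

def wheelPoint (k : ZMod N) : PlatonicVertex N := ⟦wheelPair u k⟧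

theorem det₂_wheelPair (k k' : ZMod N) :
    det₂ (wheelPair u k).val (wheelPair u k').val = k - k' := by
  simp only [det₂, wheelPair]
  linear_combination (k - k') * u.mul_inv

variable {u}

theorem wheelPoint_injective (h2 : (2 : ZMod N) ≠ 0) : Function.Injective (wheelPoint u) := by
  intro k k' h
  rcases mk_eq_mk_iff.1 h with h | h
  · exact ((Units.mul_left_inj u).1 (congrArg Prod.fst h)).symm
  · have h' : (↑u⁻¹ : ZMod N) = -↑u⁻¹ := congrArg Prod.snd h
    exact absurd (by linear_combination (u : ZMod N) * h' - 2 * u.inv_mul) h2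

theorem adj_wheelPoint_iff (h2 : (2 : ZMod N) ≠ 0) (k k' : ZMod N) :
    (Platonic N).Adj (wheelPoint u k) (wheelPoint u k') ↔ k - k' = 1 ∨ k' - k = 1 := by
  have : Nontrivial (ZMod N) := nontrivial_of_ne 2 0 h2
  have hneg : k - k' = -1 ↔ k' - k = 1 :=
    ⟨fun h => by linear_combination -h, fun h => by linear_combination -h⟩
  rw [wheelPoint, wheelPoint, adj_mk_iff, det₂_wheelPair, hneg]
  refine ⟨And.right, fun h => ⟨fun heq => ?_, h⟩⟩
  obtain rfl := wheelPoint_injective h2 heq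
  simp at h

theorem adj_mk_principal_iff_mem_range [Nontrivial (ZMod N)] {x : PlatonicPair N}
    (hx : x.val = ((u : ZMod N), 0)) (b : PlatonicVertex N) :
    (Platonic N).Adj ⟦x⟧ b ↔ b ∈ Set.range (wheelPoint u) := by
  constructor
  · obtain ⟨y, rfl⟩ := Quotient.exists_rep b
    have hdet : det₂ x.val y.val = u * y.val.2 := by simp [det₂, hx]
    rw [adj_mk_iff, hdet]
    rintro ⟨-, hy⟩
    have hy2 : y.val.2 = ↑u⁻¹ ∨ y.val.2 = -↑u⁻¹ := hy.imp
      (fun h => by linear_combination (↑u⁻¹ : ZMod N) * h - y.val.2 * u.inv_mul)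
      (fun h => by linear_combination (↑u⁻¹ : ZMod N) * h - y.val.2 * u.inv_mul)
    rcases hy2 with hy2 | hy2
    · refine ⟨y.val.1 * ↑u⁻¹, mk_eq_mk_iff.2 (Or.inl ?_)⟩
      ext <;> simp [wheelPair, hy2]
    · refine ⟨-y.val.1 * ↑u⁻¹, mk_eq_mk_iff.2 (Or.inr ?_)⟩
      ext <;> simp [wheelPair, hy2]
  · rintro ⟨k, rfl⟩
    rw [wheelPoint, adj_mk_iff]
    refine ⟨fun h => ?_, Or.inl (by simp [det₂, wheelPair, hx])⟩
    rcases mk_eq_mk_iff.1 h with h | h <;> simpa [wheelPair, hx] using congrArg Prod.snd h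

theorem induce_neighborSet_principal_iso_cycleGraph (hN : 2 < N) (u : (ZMod N)ˣ)
    {x : PlatonicPair N} (hx : x.val = ((u : ZMod N), 0)) :
    Nonempty ((Platonic N).induce ((Platonic N).neighborSet ⟦x⟧) ≃g
      SimpleGraph.cycleGraph N) := by
  obtain ⟨n, rfl⟩ : ∃ n, N = n + 2 := ⟨N - 2, by omega⟩
  have h2 : (2 : ZMod (n + 2)) ≠ 0 := fun h => Nat.not_dvd_of_pos_of_lt two_pos (by omega)
    ((ZMod.natCast_eq_zero_iff 2 _).1 (by exact_mod_cast h))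
  have : Nontrivial (ZMod (n + 2)) := nontrivial_of_ne 2 0 h2
  have hadj := adj_mk_principal_iff_mem_range hx
  let e : ZMod (n + 2) ≃ (Platonic (n + 2)).neighborSet ⟦x⟧ :=
    Equiv.ofBijective (fun k => ⟨wheelPoint u k, (hadj _).2 ⟨k, rfl⟩⟩)
      ⟨fun k k' h => wheelPoint_injective h2 (congrArg Subtype.val h),
        fun ⟨b, hb⟩ => ((hadj b).1 hb).imp fun _ hk => Subtype.ext hk⟩
  -- `ZMod (n + 2)` is `Fin (n + 2)` by definition, with the same `1` and subtraction.
  exact ⟨SimpleGraph.Iso.symm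
    { toEquiv := e
      map_rel_iff' := fun {k k'} => adj_wheelPoint_iff h2 k k' }⟩

end Wheel

end Platonic

theorem platonic_wheel_boundary_is_cycle_general (p : ℕ) (hp : p.Prime)
    (i : ℕ) (hi1 : 1 ≤ i) (hi2 : i ≤ (p - 1) / 2)
    (a : PlatonicVertex p)
    (ha : ∃ x : PlatonicPair p, ⟦x⟧ = a ∧ x.val = ((i : ZMod p), 0)) :
    Nonempty ((SimpleGraph.induce ((Platonic p).neighborSet a) (Platonic p)) ≃g
      SimpleGraph.cycleGraph p) := by
  obtain ⟨x, rfl, hx⟩ := ha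
  have hcop : i.Coprime p :=
    ((hp.coprime_iff_not_dvd).2 (Nat.not_dvd_of_pos_of_lt hi1 (by omega))).symm
  exact Platonic.induce_neighborSet_principal_iso_cycleGraph (by omega)
    (ZMod.unitOfCoprime i hcop)
    (by rw [hx, ZMod.coe_unitOfCoprime])

/-- The induced subgraph of `Π_p` on the set of neighbours of a principal-axis vertex
`[i,0]` (`1 ≤ i ≤ (p-1)/2`) is isomorphic to the cycle graph on `p` vertices. -/
theorem platonic_wheel_boundary_is_cycle (p : ℕ) (hp : p.Prime) (hodd : Odd p)
    [NeZero p] (i : ℕ) (hi1 : 1 ≤ i) (hi2 : i ≤ (p - 1) / 2)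
    (a : PlatonicVertex p)
    (ha : ∃ x : PlatonicPair p, ⟦x⟧ = a ∧ x.val = ((i : ZMod p), 0)) :
    Nonempty ((SimpleGraph.induce ((Platonic p).neighborSet a) (Platonic p)) ≃g
      SimpleGraph.cycleGraph p) :=
  platonic_wheel_boundary_is_cycle_general p hp i hi1 hi2 a ha
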